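/- arXiv:2501.08477 — 4 statements merged into one kernel-verified Lean document; each statement's English description precedes it below -/
import Mathlib

section
/- Let (U_k)_{k ∈ ℕ} be a sequence of i.i.d. positive real random variables on a probability space with expectation operator E. Assume E[U₁] = 1 and E[|log U₁|] < ∞. Then lim_{m → ∞} E[log( m^{-1} Σ_{ℓ=1}^m U_ℓ )] = 0. -/
/-!
By concavity of the logarithm, the sample mean of the `log U_ℓ` is at most `log` of the sample
mean of the `U_ℓ`, which is at most the sample mean of the `U_ℓ` minus one. Integrating the second
inequality gives `E[log(m⁻¹ ∑ U_ℓ)] ≤ 0`. For the lower bound, the difference in the first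
inequality is nonnegative and, by the strong law of large numbers applied to both sample means,
tends almost surely to `log 1 - E[log U₀]`; Fatou's lemma then yields
`liminf E[log(m⁻¹ ∑ U_ℓ)] - E[log U₀] ≥ -E[log U₀]`.
-/

open MeasureTheory ProbabilityTheory Filter Topology Finset Real

section

variable {Ω : Type*}

/-- At `m = 0` this is `0⁻¹ * 0 = 0`. -/
noncomputable def sampleMean (X : ℕ → Ω → ℝ) (m : ℕ) (ω : Ω) : ℝ :=
  (m : ℝ)⁻¹ * ∑ ℓ ∈ range m, X ℓ ω

lemma sampleMean_log_le_log_sampleMean {X : ℕ → Ω → ℝ} (hX : ∀ k ω, 0 < X k ω) (m : ℕ) (ω : Ω) :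
    sampleMean (fun k ω => log (X k ω)) m ω ≤ log (sampleMean X m ω) := by
  rcases Nat.eq_zero_or_pos m with rfl | hm
  · simp [sampleMean]
  have hweights : ∑ _ℓ ∈ range m, (m : ℝ)⁻¹ = 1 := by
    rw [sum_const, card_range, nsmul_eq_mul, mul_inv_cancel₀ (by positivity)]
  have := strictConcaveOn_log_Ioi.concaveOn.le_map_sum (t := range m) (p := fun ℓ => X ℓ ω)
    (fun _ _ => by positivity) hweights (fun ℓ _ => Set.mem_Ioi.mpr (hX ℓ ω))
  simpa only [sampleMean, smul_eq_mul, ← mul_sum] using this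

lemma sampleMean_nonneg {X : ℕ → Ω → ℝ} (hX : ∀ k ω, 0 ≤ X k ω) (m : ℕ) (ω : Ω) :
    0 ≤ sampleMean X m ω :=
  mul_nonneg (by positivity) (sum_nonneg fun ℓ _ => hX ℓ ω)

lemma sampleMean_pos {X : ℕ → Ω → ℝ} (hX : ∀ k ω, 0 < X k ω) {m : ℕ} (hm : m ≠ 0) (ω : Ω) :
    0 < sampleMean X m ω :=
  mul_pos (by positivity) (sum_pos (fun ℓ _ => hX ℓ ω) (nonempty_range_iff.mpr hm))

variable [MeasurableSpace Ω] {μ : Measure Ω}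

lemma integrable_sampleMean {X : ℕ → Ω → ℝ} (hX : ∀ k, Integrable (X k) μ) (m : ℕ) :
    Integrable (sampleMean X m) μ :=
  (integrable_finsetSum _ fun ℓ _ => hX ℓ).const_mul _

lemma integral_sampleMean {X : ℕ → Ω → ℝ} {c : ℝ} (hX : ∀ k, Integrable (X k) μ)
    (hmean : ∀ k, ∫ ω, X k ω ∂μ = c) {m : ℕ} (hm : m ≠ 0) :
    ∫ ω, sampleMean X m ω ∂μ = c := by
  simp only [sampleMean, integral_const_mul, integral_finsetSum _ fun ℓ _ => hX ℓ, hmean,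
    sum_const, card_range, nsmul_eq_mul]
  field_simp

lemma ProbabilityTheory.iIndepFun.pairwise_indepFun {ι β : Type*} [MeasurableSpace β]
    {X : ι → Ω → β} (h : iIndepFun X μ) : Pairwise (Function.onFun (· ⟂ᵢ[μ] ·) X) :=
  fun _ _ hij => h.indepFun hij

lemma ae_tendsto_sampleMean {X : ℕ → Ω → ℝ} (hint : Integrable (X 0) μ)
    (hindep : Pairwise (Function.onFun (· ⟂ᵢ[μ] ·) X))
    (hident : ∀ k, IdentDistrib (X k) (X 0) μ μ) :
    ∀ᵐ ω ∂μ, Tendsto (fun m => sampleMean X m ω) atTop (𝓝 (∫ ω, X 0 ω ∂μ)) := by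
  filter_upwards [strong_law_ae_real X hint hindep hident] with ω hω
  simpa only [sampleMean, div_eq_inv_mul] using hω

/-- Fatou's lemma for nonnegative real integrands. -/
lemma eventually_lt_integral_of_tendsto_ae [IsProbabilityMeasure μ] {ψ : ℕ → Ω → ℝ} {a b : ℝ}
    (hint : ∀ m, Integrable (ψ m) μ) (hnonneg : ∀ m, 0 ≤ᵐ[μ] ψ m)
    (hlim : ∀ᵐ ω ∂μ, Tendsto (fun m => ψ m ω) atTop (𝓝 a)) (hb : b < a) :
    ∀ᶠ m in atTop, b < ∫ ω, ψ m ω ∂μ := by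
  rcases lt_or_ge b 0 with hb0 | hb0
  · exact Eventually.of_forall fun m => hb0.trans_le (integral_nonneg_of_ae (hnonneg m))
  have hliminf : ∫⁻ ω, liminf (fun m => ENNReal.ofReal (ψ m ω)) atTop ∂μ = ENNReal.ofReal a := by
    rw [lintegral_congr_ae (g := fun _ => ENNReal.ofReal a), lintegral_const, measure_univ,
      mul_one]
    filter_upwards [hlim] with ω hω
    exact ((ENNReal.continuous_ofReal.tendsto a).comp hω).liminf_eq
  have hfatou : ENNReal.ofReal b < liminf (fun m => ∫⁻ ω, ENNReal.ofReal (ψ m ω) ∂μ) atTop :=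
    ((ENNReal.ofReal_lt_ofReal_iff (hb0.trans_lt hb)).mpr hb).trans_le <| hliminf ▸
      lintegral_liminf_le' fun m => (hint m).aemeasurable.ennreal_ofReal
  filter_upwards [eventually_lt_of_lt_liminf hfatou] with m hm
  rwa [← ofReal_integral_eq_lintegral_ofReal (hint m) (hnonneg m),
    ENNReal.ofReal_lt_ofReal_iff_of_nonneg hb0] at hm

lemma integrable_log_sampleMean {X : ℕ → Ω → ℝ} (hpos : ∀ k ω, 0 < X k ω)
    (hint : ∀ k, Integrable (X k) μ) (hlog : ∀ k, Integrable (fun ω => log (X k ω)) μ) (m : ℕ) :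
    Integrable (fun ω => log (sampleMean X m ω)) μ :=
  integrable_of_le_of_le
    (measurable_log.comp_aemeasurable
      (integrable_sampleMean hint m).aemeasurable).aestronglyMeasurable
    (.of_forall (sampleMean_log_le_log_sampleMean hpos m))
    (.of_forall fun ω => log_le_self (sampleMean_nonneg (fun k ω => (hpos k ω).le) m ω))
    (integrable_sampleMean hlog m) (integrable_sampleMean hint m)

lemma integral_log_sampleMean_nonpos [IsProbabilityMeasure μ] {X : ℕ → Ω → ℝ}
    (hpos : ∀ k ω, 0 < X k ω) (hint : ∀ k, Integrable (X k) μ)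
    (hlog : ∀ k, Integrable (fun ω => log (X k ω)) μ) (hmean : ∀ k, ∫ ω, X k ω ∂μ = 1) (m : ℕ) :
    ∫ ω, log (sampleMean X m ω) ∂μ ≤ 0 := by
  rcases eq_or_ne m 0 with rfl | hm
  · simp [sampleMean]
  calc ∫ ω, log (sampleMean X m ω) ∂μ ≤ ∫ ω, (sampleMean X m ω - 1) ∂μ :=
        integral_mono (integrable_log_sampleMean hpos hint hlog m)
          ((integrable_sampleMean hint m).sub (integrable_const 1))
          fun ω => log_le_sub_one_of_pos (sampleMean_pos hpos hm ω)
    _ = 0 := by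
      rw [integral_sub (integrable_sampleMean hint m) (integrable_const 1),
        integral_sampleMean hint hmean hm]
      simp

lemma eventually_lt_integral_log_sampleMean [IsProbabilityMeasure μ] {X : ℕ → Ω → ℝ} {c b : ℝ}
    (hpos : ∀ k ω, 0 < X k ω) (hint : ∀ k, Integrable (X k) μ)
    (hlog : ∀ k, Integrable (fun ω => log (X k ω)) μ) (hlogmean : ∀ k, ∫ ω, log (X k ω) ∂μ = c)
    (hlim : ∀ᵐ ω ∂μ, Tendsto (fun m => sampleMean X m ω) atTop (𝓝 1))
    (hloglim : ∀ᵐ ω ∂μ, Tendsto (fun m => sampleMean (fun k ω => log (X k ω)) m ω) atTop (𝓝 c))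
    (hb : b < 0) :
    ∀ᶠ m in atTop, b < ∫ ω, log (sampleMean X m ω) ∂μ := by
  have hgap_lim : ∀ᵐ ω ∂μ, Tendsto
      (fun m => log (sampleMean X m ω) - sampleMean (fun k ω => log (X k ω)) m ω) atTop
      (𝓝 (0 - c)) := by
    filter_upwards [hlim, hloglim] with ω hω hω_log
    simpa using ((continuousAt_log one_ne_zero).tendsto.comp hω).sub hω_log
  have hgap := eventually_lt_integral_of_tendsto_ae
    (ψ := fun m ω => log (sampleMean X m ω) - sampleMean (fun k ω => log (X k ω)) m ω)
    (fun m => (integrable_log_sampleMean hpos hint hlog m).sub (integrable_sampleMean hlog m))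
    (fun m => .of_forall fun ω => sub_nonneg.mpr (sampleMean_log_le_log_sampleMean hpos m ω))
    hgap_lim (sub_lt_sub_right hb c)
  filter_upwards [hgap, eventually_ne_atTop 0] with m hm hm0
  rw [integral_sub (integrable_log_sampleMean hpos hint hlog m) (integrable_sampleMean hlog m),
    integral_sampleMean hlog hlogmean hm0] at hm
  exact (sub_lt_sub_iff_right c).mp hm

end

/-- Let `(U_k)` be i.i.d. positive real random variables with `E[U₁] = 1` and
`E[|log U₁|] < ∞`.  Then `lim_{m → ∞} E[log(m⁻¹ Σ_{ℓ=1}^m U_ℓ)] = 0`. -/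
theorem tendsto_integral_log_avg_iid
    {Ω : Type*} [MeasurableSpace Ω] (P : Measure Ω) [IsProbabilityMeasure P]
    (U : ℕ → Ω → ℝ) (hUmeas : ∀ k, Measurable (U k))
    (hindep : iIndepFun U P)
    (hident : ∀ k, P.map (U k) = P.map (U 0))
    (hUpos : ∀ k ω, 0 < U k ω)
    (hUint : Integrable (U 0) P) (hUmean : ∫ ω, U 0 ω ∂P = 1)
    (hlogint : Integrable (fun ω => |Real.log (U 0 ω)|) P) :
    Tendsto (fun m : ℕ =>
        ∫ ω, Real.log ((m : ℝ)⁻¹ * ∑ ℓ ∈ Finset.range m, U ℓ ω) ∂P)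
      atTop (nhds 0) := by
  change Tendsto (fun m => ∫ ω, log (sampleMean U m ω) ∂P) atTop (𝓝 0)
  have hUid k : IdentDistrib (U k) (U 0) P P :=
    ⟨(hUmeas k).aemeasurable, (hUmeas 0).aemeasurable, hident k⟩
  have hLid k : IdentDistrib (fun ω => log (U k ω)) (fun ω => log (U 0 ω)) P P :=
    (hUid k).comp measurable_log
  have hLint : Integrable (fun ω => log (U 0 ω)) P :=
    (integrable_norm_iff (measurable_log.comp (hUmeas 0)).aestronglyMeasurable).mp hlogint
  have hUint' k := (hUid k).integrable_iff.mpr hUint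
  have hLint' k := (hLid k).integrable_iff.mpr hLint
  refine tendsto_order.2 ⟨fun b hb => ?_, fun b hb => .of_forall fun m => ?_⟩
  · have hlim := ae_tendsto_sampleMean hUint hindep.pairwise_indepFun hUid
    rw [hUmean] at hlim
    exact eventually_lt_integral_log_sampleMean hUpos hUint' hLint'
      (fun k => (hLid k).integral_eq) hlim
      (ae_tendsto_sampleMean hLint
        (hindep.comp (fun _ => log) fun _ => measurable_log).pairwise_indepFun hLid) hb
  · exact (integral_log_sampleMean_nonpos hUpos hUint' hLint'
      (fun k => (hUid k).integral_eq.trans hUmean) m).trans_lt hb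
end

section
/- Let R be a strictly positive real random variable with E[R] = 1, E[|log R|] < ∞, E[(R − 1)²] < ∞ and E[(R − 1)² |log R|] < ∞. Then |E[log R] + E[(R − 1)²]/2| ≤ E[(R − 1)² |log R|]. -/
/-!
The function `φ(x) = log x - (x - 1) + (x - 1)² / 2` vanishes at `1` and has derivative
`(x - 1)² / x ≥ 0`, while `(x - 1)² log x - φ(x)` vanishes at `1` and has derivative
`2 (x - 1) log x ≥ 0`. Hence `φ(x)` lies between `0` and `(x - 1)² log x`, so
`|φ(x)| ≤ (x - 1)² |log x|`. Since `E[R - 1] = 0`, the left-hand side of the theorem is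
`|E[φ(R)]|`.
-/

open MeasureTheory Real Set

lemma monotoneOn_Ioi_of_hasDerivAt_nonneg {f f' : ℝ → ℝ} {a : ℝ}
    (hf : ∀ x ∈ Ioi a, HasDerivAt f (f' x) x) (hf' : ∀ x ∈ Ioi a, 0 ≤ f' x) :
    MonotoneOn f (Ioi a) :=
  monotoneOn_of_hasDerivWithinAt_nonneg (convex_Ioi a)
    (fun x hx => (hf x hx).continuousAt.continuousWithinAt)
    (fun x hx => (hf x (interior_subset hx)).hasDerivWithinAt)
    (fun x hx => hf' x (interior_subset hx))

noncomputable def logTaylorRemainder (x : ℝ) : ℝ := log x - (x - 1) + (x - 1) ^ 2 / 2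

lemma hasDerivAt_logTaylorRemainder {x : ℝ} (hx : 0 < x) :
    HasDerivAt logTaylorRemainder ((x - 1) ^ 2 / x) x := by
  have hsq : HasDerivAt (fun y : ℝ => (y - 1) ^ 2 / 2) (x - 1) x := by
    simpa using (((hasDerivAt_id x).sub_const 1).fun_pow 2).div_const 2
  refine (((hasDerivAt_log hx.ne').sub ((hasDerivAt_id x).sub_const 1)).add hsq).congr_deriv ?_
  field_simp
  ring

lemma hasDerivAt_sq_mul_log_sub_logTaylorRemainder {x : ℝ} (hx : 0 < x) :
    HasDerivAt (fun y => (y - 1) ^ 2 * log y - logTaylorRemainder y)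
      (2 * (x - 1) * log x) x := by
  have hsq : HasDerivAt (fun y : ℝ => (y - 1) ^ 2) (2 * (x - 1)) x := by
    simpa using ((hasDerivAt_id x).sub_const 1).fun_pow 2
  refine ((hsq.mul (hasDerivAt_log hx.ne')).sub (hasDerivAt_logTaylorRemainder hx)).congr_deriv ?_
  field_simp
  ring

lemma monotoneOn_logTaylorRemainder : MonotoneOn logTaylorRemainder (Ioi 0) :=
  monotoneOn_Ioi_of_hasDerivAt_nonneg (fun _ hx => hasDerivAt_logTaylorRemainder hx)
    (fun x hx => by have : (0 : ℝ) < x := hx; positivity)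

lemma monotoneOn_sq_mul_log_sub_logTaylorRemainder :
    MonotoneOn (fun x => (x - 1) ^ 2 * log x - logTaylorRemainder x) (Ioi 0) := by
  refine monotoneOn_Ioi_of_hasDerivAt_nonneg
    (fun _ hx => hasDerivAt_sq_mul_log_sub_logTaylorRemainder hx) (fun x hx => ?_)
  rcases le_total 1 x with h | h
  · have := log_nonneg h
    nlinarith
  · have := log_nonpos (le_of_lt hx) h
    nlinarith

lemma abs_logTaylorRemainder_le {x : ℝ} (hx : 0 < x) :
    |logTaylorRemainder x| ≤ (x - 1) ^ 2 * |log x| := by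
  have h1 : (1 : ℝ) ∈ Ioi 0 := mem_Ioi.mpr zero_lt_one
  have hrem_one : logTaylorRemainder 1 = 0 := by simp [logTaylorRemainder]
  rcases le_total 1 x with h | h
  · have hrem := monotoneOn_logTaylorRemainder h1 hx h
    have hdiff := monotoneOn_sq_mul_log_sub_logTaylorRemainder h1 hx h
    simp only [hrem_one, log_one, mul_zero, sub_zero] at hrem hdiff
    rw [abs_of_nonneg hrem, abs_of_nonneg (log_nonneg h)]
    linarith
  · have hrem := monotoneOn_logTaylorRemainder hx h1 h
    have hdiff := monotoneOn_sq_mul_log_sub_logTaylorRemainder hx h1 h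
    simp only [hrem_one, log_one, mul_zero, sub_zero] at hrem hdiff
    rw [abs_of_nonpos hrem, abs_of_nonpos (log_nonpos hx.le h)]
    linarith

lemma integral_log_add_integral_sq_div_two {Ω : Type*} [MeasurableSpace Ω]
    {P : Measure Ω} [IsProbabilityMeasure P] {R : Ω → ℝ} (hRint : Integrable R P)
    (hRmean : ∫ ω, R ω ∂P = 1) (hlog : Integrable (fun ω => log (R ω)) P)
    (hsq : Integrable (fun ω => (R ω - 1) ^ 2) P) :
    (∫ ω, log (R ω) ∂P) + (∫ ω, (R ω - 1) ^ 2 ∂P) / 2 =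
      ∫ ω, logTaylorRemainder (R ω) ∂P := by
  have hcentered : Integrable (fun ω => R ω - 1) P := hRint.sub (integrable_const 1)
  have hmean_zero : ∫ ω, (R ω - 1) ∂P = 0 := by
    rw [integral_sub hRint (integrable_const 1), hRmean, integral_const, probReal_univ, one_smul,
      sub_self]
  have hlog_sub : Integrable (fun ω => log (R ω) - (R ω - 1)) P := hlog.sub hcentered
  unfold logTaylorRemainder
  rw [integral_add hlog_sub (hsq.div_const 2), integral_sub hlog hcentered,
    hmean_zero, integral_div, sub_zero]

/-- Let `R` be a strictly positive real random variable with `E[R] = 1`,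
`E[|log R|] < ∞`, `E[(R − 1)²] < ∞` and `E[(R − 1)² |log R|] < ∞`.  Then
`|E[log R] + E[(R − 1)²]/2| ≤ E[(R − 1)² |log R|]`. -/
theorem abs_expectation_log_add_half_var_le
    {Ω : Type*} [MeasurableSpace Ω] (P : Measure Ω) [IsProbabilityMeasure P]
    (R : Ω → ℝ) (hRpos : ∀ ω, 0 < R ω)
    (hRint : Integrable R P) (hRmean : ∫ ω, R ω ∂P = 1)
    (hlogint : Integrable (fun ω => |Real.log (R ω)|) P)
    (hsqint : Integrable (fun ω => (R ω - 1) ^ 2) P)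
    (hsqlogint : Integrable (fun ω => (R ω - 1) ^ 2 * |Real.log (R ω)|) P) :
    |(∫ ω, Real.log (R ω) ∂P) + (∫ ω, (R ω - 1) ^ 2 ∂P) / 2|
      ≤ ∫ ω, (R ω - 1) ^ 2 * |Real.log (R ω)| ∂P := by
  have hlog_meas : AEStronglyMeasurable (fun ω => log (R ω)) P :=
    (measurable_log.comp_aemeasurable hRint.aemeasurable).aestronglyMeasurable
  have hlog : Integrable (fun ω => log (R ω)) P := (integrable_norm_iff hlog_meas).mp hlogint
  rw [integral_log_add_integral_sq_div_two hRint hRmean hlog hsqint]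
  exact norm_integral_le_of_norm_le hsqlogint
    (Filter.Eventually.of_forall fun ω =>
      (norm_eq_abs _).trans_le (abs_logTaylorRemainder_le (hRpos ω)))
end

section
/- Let (U_ℓ)_{ℓ ∈ ℕ} be an i.i.d. sequence of strictly positive real random variables with E[U₁] < ∞ and E[|log U₁|] < ∞. Let m ≥ 1 and k ≥ 1 be integers, and write k = m⌊k/m⌋ + r with r ∈ {0, 1, …, m − 1}. Then E[log( k^{-1} Σ_{ℓ=1}^k U_ℓ )] ≥ (m⌊k/m⌋/k) · E[log( m^{-1} Σ_{ℓ=1}^m U_ℓ )] + (r/k) · E[log U₁]. -/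
/-!
Write `k = m q + r`. The average of `U_0, …, U_{k-1}` is the convex combination of the `q`
averages over the blocks `[m j, m j + m)`, with weight `m / k` each, and of the `r` leftover
values, with weight `1 / k` each; concavity of `log` bounds its logarithm from below by the same
combination of logarithms. Integrating, every block term has the expectation of the first block,
since by independence the law of each block is the product of `m` copies of the law of `U_0`.
-/

open MeasureTheory ProbabilityTheory Finset Real

theorem sum_range_mul_eq_sum_sum {M : Type*} [AddCommMonoid M] (f : ℕ → M) (m q : ℕ) :
    ∑ l ∈ range (m * q), f l = ∑ j ∈ range q, ∑ i ∈ range m, f (m * j + i) := by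
  induction q with
  | zero => simp
  | succ q ih => rw [Nat.mul_succ, sum_range_add, ih, sum_range_succ]

theorem sum_mul_log_le_log_sum_mul {ι : Type*} {t : Finset ι} {w p : ι → ℝ}
    (hw : ∀ i ∈ t, 0 ≤ w i) (hw₁ : ∑ i ∈ t, w i = 1) (hp : ∀ i ∈ t, 0 < p i) :
    ∑ i ∈ t, w i * log (p i) ≤ log (∑ i ∈ t, w i * p i) := by
  simpa using strictConcaveOn_log_Ioi.concaveOn.le_map_sum hw hw₁ hp

theorem inv_mul_sum_log_le_log_inv_mul_sum {x : ℕ → ℝ} (hx : ∀ l, 0 < x l) {n : ℕ}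
    (hn : 0 < n) :
    (n : ℝ)⁻¹ * ∑ i ∈ range n, log (x i) ≤ log ((n : ℝ)⁻¹ * ∑ i ∈ range n, x i) := by
  simp only [mul_sum]
  refine sum_mul_log_le_log_sum_mul (fun _ _ => by positivity) ?_ (fun i _ => hx i)
  simp [hn.ne']

theorem sum_log_block_avg_le_log_avg {x : ℕ → ℝ} (hx : ∀ l, 0 < x l) {m q r k : ℕ}
    (hm : 0 < m) (hk : 0 < k) (hqr : m * q + r = k) :
    ∑ j ∈ range q, (m : ℝ) / k * log ((m : ℝ)⁻¹ * ∑ i ∈ range m, x (m * j + i))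
        + ∑ j ∈ range r, 1 / (k : ℝ) * log (x (m * q + j))
      ≤ log ((k : ℝ)⁻¹ * ∑ l ∈ range k, x l) := by
  set w : ℕ ⊕ ℕ → ℝ := Sum.elim (fun _ => (m : ℝ) / k) (fun _ => 1 / (k : ℝ))
  set p : ℕ ⊕ ℕ → ℝ := Sum.elim (fun j => (m : ℝ)⁻¹ * ∑ i ∈ range m, x (m * j + i))
    (fun j => x (m * q + j))
  have hk' : (k : ℝ) ≠ 0 := by positivity
  have hw : ∀ i ∈ (range q).disjSum (range r), 0 ≤ w i := by
    rintro (j | j) _ <;> simp only [w, Sum.elim_inl, Sum.elim_inr] <;> positivity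
  have hw₁ : ∑ i ∈ (range q).disjSum (range r), w i = 1 := by
    rw [sum_disjSum]
    simp only [w, Sum.elim_inl, Sum.elim_inr, sum_const, card_range, nsmul_eq_mul]
    have hkR : (k : ℝ) = m * q + r := by exact_mod_cast hqr.symm
    rw [← mul_div_assoc, mul_one_div, ← add_div, div_eq_one_iff_eq hk', hkR]
    ring
  have hp : ∀ i ∈ (range q).disjSum (range r), 0 < p i := by
    rintro (j | j) _
    · exact mul_pos (by positivity) (sum_pos (fun i _ => hx _) (nonempty_range_iff.2 hm.ne'))
    · exact hx _
  have hwp : ∑ i ∈ (range q).disjSum (range r), w i * p i = (k : ℝ)⁻¹ * ∑ l ∈ range k, x l := by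
    rw [sum_disjSum, ← hqr, sum_range_add, sum_range_mul_eq_sum_sum, mul_add, mul_sum, mul_sum]
    simp only [w, p, Sum.elim_inl, Sum.elim_inr, ← hqr]
    congr 1
    · refine sum_congr rfl fun j _ => ?_
      field_simp
    · simp only [one_div]
  simpa only [sum_disjSum, hwp, w, p, Sum.elim_inl, Sum.elim_inr] using
    sum_mul_log_le_log_sum_mul hw hw₁ hp

section Probability

variable {Ω : Type*} [MeasurableSpace Ω] {P : Measure Ω}

theorem ProbabilityTheory.iIndepFun.map_precomp_eq_pi {κ ι β : Type*} [Fintype ι]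
    [MeasurableSpace β] {U : κ → Ω → β} (hU : ∀ l, AEMeasurable (U l) P)
    (hindep : iIndepFun U P) {μ : Measure β} (hident : ∀ l, P.map (U l) = μ) {g : ι → κ}
    (hg : g.Injective) :
    P.map (fun ω i => U (g i) ω) = Measure.pi fun _ : ι => μ := by
  rw [(hindep.precomp hg).map_fun_eq_pi_map fun i => hU (g i)]
  simp only [hident]

theorem integral_log_avg_shift_eq {U : ℕ → Ω → ℝ} (hU : ∀ l, Measurable (U l))
    (hindep : iIndepFun U P) {μ : Measure ℝ} (hident : ∀ l, P.map (U l) = μ) (n a : ℕ) :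
    ∫ ω, log ((n : ℝ)⁻¹ * ∑ i ∈ range n, U (a + i) ω) ∂P
      = ∫ ω, log ((n : ℝ)⁻¹ * ∑ i ∈ range n, U i ω) ∂P := by
  have hU' : ∀ l, AEMeasurable (U l) P := fun l => (hU l).aemeasurable
  have hlaw : IdentDistrib (fun ω (i : Fin n) => U (a + i) ω) (fun ω (i : Fin n) => U i ω) P P :=
    { aemeasurable_fst := aemeasurable_pi_lambda _ fun i => hU' _
      aemeasurable_snd := aemeasurable_pi_lambda _ fun i => hU' _
      map_eq := by
        rw [hindep.map_precomp_eq_pi hU' hident (g := fun i : Fin n => a + i)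
            ((add_right_injective a).comp Fin.val_injective),
          hindep.map_precomp_eq_pi hU' hident (g := fun i : Fin n => (i : ℕ))
            Fin.val_injective] }
  have hφ : Measurable fun x : Fin n → ℝ => log ((n : ℝ)⁻¹ * ∑ i, x i) := by fun_prop
  simpa only [Function.comp_def, Finset.sum_range] using (hlaw.comp hφ).integral_eq

theorem integrable_log_avg {X : ℕ → Ω → ℝ} (hX : ∀ i, Measurable (X i))
    (hpos : ∀ i ω, 0 < X i ω) (hint : ∀ i, Integrable (X i) P)
    (hlog : ∀ i, Integrable (fun ω => log (X i ω)) P) {n : ℕ} (hn : 0 < n) :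
    Integrable (fun ω => log ((n : ℝ)⁻¹ * ∑ i ∈ range n, X i ω)) P :=
  integrable_of_le_of_le (Measurable.log (by fun_prop)).aestronglyMeasurable
    (ae_of_all _ fun ω => inv_mul_sum_log_le_log_inv_mul_sum (fun i => hpos i ω) hn)
    (ae_of_all _ fun ω => log_le_self <|
      mul_nonneg (by positivity) (sum_nonneg fun i _ => (hpos i ω).le))
    ((integrable_finsetSum _ fun i _ => hlog i).const_mul _)
    ((integrable_finsetSum _ fun i _ => hint i).const_mul _)

end Probability

theorem integral_log_avg_block_lower_bound_general
    {Ω : Type*} [MeasurableSpace Ω] (P : Measure Ω)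
    (U : ℕ → Ω → ℝ) (hUmeas : ∀ k, Measurable (U k))
    (hindep : iIndepFun U P)
    (hident : ∀ k, P.map (U k) = P.map (U 0))
    (hUpos : ∀ k ω, 0 < U k ω)
    (hUint : Integrable (U 0) P)
    (hlogint : Integrable (fun ω => |Real.log (U 0 ω)|) P)
    (m k : ℕ) (hm : 1 ≤ m) (hk : 1 ≤ k) :
    ((m * (k / m) : ℕ) : ℝ) / (k : ℝ)
          * (∫ ω, Real.log ((m : ℝ)⁻¹ * ∑ ℓ ∈ Finset.range m, U ℓ ω) ∂P)
        + ((k % m : ℕ) : ℝ) / (k : ℝ) * (∫ ω, Real.log (U 0 ω) ∂P)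
      ≤ ∫ ω, Real.log ((k : ℝ)⁻¹ * ∑ ℓ ∈ Finset.range k, U ℓ ω) ∂P := by
  have hlaw : ∀ l, IdentDistrib (U l) (U 0) P P := fun l =>
    ⟨(hUmeas l).aemeasurable, (hUmeas 0).aemeasurable, hident l⟩
  have hlaw_log : ∀ l, IdentDistrib (fun ω => log (U l ω)) (fun ω => log (U 0 ω)) P P :=
    fun l => (hlaw l).comp measurable_log
  have hint : ∀ l, Integrable (U l) P := fun l => (hlaw l).integrable_iff.2 hUint
  have hlog : ∀ l, Integrable (fun ω => log (U l ω)) P := fun l =>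
    (hlaw_log l).integrable_iff.2 <|
      (integrable_norm_iff (measurable_log.comp (hUmeas 0)).aestronglyMeasurable).1 hlogint
  have hblocks := fun j (_ : j ∈ range (k / m)) =>
    (integrable_log_avg (fun i => hUmeas (m * j + i)) (fun i => hUpos _) (fun i => hint _)
      (fun i => hlog _) hm).const_mul ((m : ℝ) / k)
  have hrest := fun j (_ : j ∈ range (k % m)) =>
    (hlog (m * (k / m) + j)).const_mul (1 / (k : ℝ))
  have hjensen := integral_mono
    ((integrable_finsetSum _ hblocks).add (integrable_finsetSum _ hrest))
    (integrable_log_avg hUmeas hUpos hint hlog hk)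
    fun ω => sum_log_block_avg_le_log_avg (fun l => hUpos l ω) hm hk (Nat.div_add_mod k m)
  rw [integral_add' (integrable_finsetSum _ hblocks) (integrable_finsetSum _ hrest),
    integral_finsetSum _ hblocks, integral_finsetSum _ hrest] at hjensen
  simp only [integral_const_mul, integral_log_avg_shift_eq hUmeas hindep hident m,
    (hlaw_log _).integral_eq, sum_const, card_range, nsmul_eq_mul] at hjensen
  refine le_trans (le_of_eq ?_) hjensen
  rw [Nat.cast_mul]
  ring

/-- Block lower bound for the expected log of an average of i.i.d. positive variables:
with `k = m⌊k/m⌋ + r`, `r = k % m`,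
`E[log(k⁻¹ Σ_{ℓ=1}^k U_ℓ)] ≥ (m⌊k/m⌋/k) E[log(m⁻¹ Σ_{ℓ=1}^m U_ℓ)] + (r/k) E[log U₁]`. -/
theorem integral_log_avg_block_lower_bound
    {Ω : Type*} [MeasurableSpace Ω] (P : Measure Ω) [IsProbabilityMeasure P]
    (U : ℕ → Ω → ℝ) (hUmeas : ∀ k, Measurable (U k))
    (hindep : iIndepFun U P)
    (hident : ∀ k, P.map (U k) = P.map (U 0))
    (hUpos : ∀ k ω, 0 < U k ω)
    (hUint : Integrable (U 0) P)
    (hlogint : Integrable (fun ω => |Real.log (U 0 ω)|) P)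
    (m k : ℕ) (hm : 1 ≤ m) (hk : 1 ≤ k) :
    ((m * (k / m) : ℕ) : ℝ) / (k : ℝ)
          * (∫ ω, Real.log ((m : ℝ)⁻¹ * ∑ ℓ ∈ Finset.range m, U ℓ ω) ∂P)
        + ((k % m : ℕ) : ℝ) / (k : ℝ) * (∫ ω, Real.log (U 0 ω) ∂P)
      ≤ ∫ ω, Real.log ((k : ℝ)⁻¹ * ∑ ℓ ∈ Finset.range k, U ℓ ω) ∂P :=
  integral_log_avg_block_lower_bound_general P U hUmeas hindep hident hUpos hUint hlogint m k hm hk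
end

section
/- The mean of the standard Gumbel distribution equals the Euler–Mascheroni constant γ; that is, ∫_ℝ z · e^{−z} · exp(−e^{−z}) dz = γ, where z ↦ e^{−z} exp(−e^{−z}) is a probability density on ℝ with respect to Lebesgue measure. -/
open MeasureTheory Real

private lemma gumbel_sub (g : ℝ → ℝ) :
    (∫ t in Set.Ioi (0:ℝ), g t) = ∫ z : ℝ, Real.exp (-z) * g (Real.exp (-z)) := by
  have himg : (fun z : ℝ => Real.exp (-z)) '' Set.univ = Set.Ioi (0:ℝ) := by
    rw [Set.image_univ]
    ext x
    constructor
    · rintro ⟨z, rfl⟩; exact Real.exp_pos _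
    · intro hx; exact ⟨-Real.log x, by simp [Real.exp_log hx]⟩
  have hderiv : ∀ x ∈ (Set.univ : Set ℝ),
      HasDerivWithinAt (fun z : ℝ => Real.exp (-z)) (-Real.exp (-x)) Set.univ x := by
    intro x _
    have h : HasDerivAt (fun z : ℝ => Real.exp (-z)) (Real.exp (-x) * (-1)) x :=
      (Real.hasDerivAt_exp (-x)).comp x (hasDerivAt_neg x)
    simpa using h
  have hinj : Set.InjOn (fun z : ℝ => Real.exp (-z)) Set.univ := by
    intro a _ b _ h
    have := Real.exp_injective h
    linarith [neg_injective this]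
  have := MeasureTheory.integral_image_eq_integral_abs_deriv_smul
    MeasurableSet.univ hderiv hinj g
  rw [himg] at this
  simpa [abs_of_nonneg (Real.exp_nonneg _)] using this

private lemma log_exp_integral :
    (∫ t in Set.Ioi (0:ℝ), Real.log t * Real.exp (-t)) = -Real.eulerMascheroniConstant := by
  have h1 := Complex.hasDerivAt_GammaIntegral (s := 1) (by norm_num)
  have h2 : Complex.Gamma =ᶠ[nhds (1:ℂ)] Complex.GammaIntegral := by
    have hopen : IsOpen {s : ℂ | 0 < s.re} := isOpen_lt continuous_const Complex.continuous_re
    filter_upwards [hopen.mem_nhds (by norm_num : (0:ℝ) < (1:ℂ).re)] with s hs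
    exact Complex.Gamma_eq_integral hs
  have h3 : HasDerivAt Complex.Gamma
      (∫ t : ℝ in Set.Ioi 0, (t:ℂ) ^ ((1:ℂ) - 1) * (Real.log t * Real.exp (-t))) 1 :=
    h1.congr_of_eventuallyEq h2
  have h4 := h3.unique Complex.hasDerivAt_Gamma_one
  simp only [sub_self, Complex.cpow_zero, one_mul, ← Complex.ofReal_mul] at h4
  have h5 := integral_ofReal (𝕜 := ℂ) (f := fun t : ℝ => Real.log t * Real.exp (-t))
    (μ := (volume : Measure ℝ).restrict (Set.Ioi 0))
  apply Complex.ofReal_injective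
  rw [Complex.ofReal_neg, ← h4]
  exact h5.symm

/-- The map `z ↦ e^{−z} exp(−e^{−z})` is a probability density on `ℝ` (standard Gumbel), and
the mean of the standard Gumbel distribution equals the Euler–Mascheroni constant `γ`. -/
theorem gumbel_mean_eq_eulerMascheroni :
    (∫ z : ℝ, Real.exp (-z) * Real.exp (-Real.exp (-z))) = 1 ∧
    (∫ z : ℝ, z * (Real.exp (-z) * Real.exp (-Real.exp (-z))))
      = Real.eulerMascheroniConstant := by
  constructor
  · rw [← gumbel_sub (fun t => Real.exp (-t))]
    exact integral_exp_neg_Ioi_zero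
  · have h := gumbel_sub (fun t => -Real.log t * Real.exp (-t))
    simp only [Real.log_exp, neg_neg] at h
    have heq : (fun z : ℝ => z * (Real.exp (-z) * Real.exp (-Real.exp (-z))))
        = fun z : ℝ => Real.exp (-z) * (z * Real.exp (-Real.exp (-z))) := by
      funext z; ring
    rw [heq, ← h]
    have : (fun t : ℝ => -Real.log t * Real.exp (-t))
        = fun t : ℝ => -(Real.log t * Real.exp (-t)) := by funext t; ring
    rw [this, integral_neg, log_exp_integral, neg_neg]
end
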